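/- arXiv:2602.15269 — 2 statements merged into one kernel-verified Lean document; each statement's English description precedes it below -/
import Mathlib

section
/- Let S be a nonempty finite index set, let B_s ≥ 0 and u_s ≥ 0 be real numbers for each s ∈ S, and let C ≥ 0. Then the optimal value of the linear program minimize Σ_{s∈S} v_s subject to B_s ≤ u_s + q_s + v_s for all s, Σ_{s∈S} q_s ≤ C, and q_s ≥ 0, v_s ≥ 0 for all s, equals max(Σ_{s∈S} max(B_s − u_s, 0) − C, 0). -/
/-!
Write `d s = max (B s - u s) 0` for the shortage of specialty `s`. Every feasible plan covers
each shortage by shared beds and surge capacity, `d s ≤ q s + v s`, so summing gives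
`∑ d - C ≤ ∑ v`. Conversely, if the total shortage exceeds `C`, splitting every shortage in
the fixed ratio `C : (∑ d - C)` between shared beds and surge capacity attains this bound.
-/

open Finset

section ShortageSplit

variable {ι : Type*} (S : Finset ι) (C : ℝ)

theorem sum_max_sub_le_sum_of_le_add {d q v : ι → ℝ} (hcover : ∀ s ∈ S, d s ≤ q s + v s)
    (hqC : ∑ s ∈ S, q s ≤ C) (hq : ∀ s ∈ S, 0 ≤ q s) (hv : ∀ s ∈ S, 0 ≤ v s) :
    ∑ s ∈ S, max (d s) 0 - C ≤ ∑ s ∈ S, v s := by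
  have hpos : ∑ s ∈ S, max (d s) 0 ≤ ∑ s ∈ S, (q s + v s) :=
    sum_le_sum fun s hs => max_le (hcover s hs) (add_nonneg (hq s hs) (hv s hs))
  rw [sum_add_distrib] at hpos
  linarith

theorem exists_split_sum_le {e : ι → ℝ} (he : ∀ s ∈ S, 0 ≤ e s) (hC : 0 ≤ C) :
    ∃ q v : ι → ℝ, (∀ s ∈ S, q s + v s = e s) ∧ ∑ s ∈ S, q s ≤ C ∧
      (∀ s ∈ S, 0 ≤ q s) ∧ (∀ s ∈ S, 0 ≤ v s) ∧ ∑ s ∈ S, v s = max (∑ s ∈ S, e s - C) 0 := by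
  set D := ∑ s ∈ S, e s
  rcases le_or_gt D C with hDC | hCD
  · refine ⟨e, 0, fun s _ => add_zero _, hDC, he, fun _ _ => le_rfl, ?_⟩
    simp [max_eq_right (sub_nonpos.mpr hDC)]
  · have hD : 0 < D := hC.trans_lt hCD
    set θ := C / D
    have hθ0 : 0 ≤ θ := div_nonneg hC hD.le
    have hθ1 : θ ≤ 1 := (div_le_one hD).mpr hCD.le
    have hθD : θ * D = C := div_mul_cancel₀ C hD.ne'
    refine ⟨fun s => θ * e s, fun s => (1 - θ) * e s, fun s _ => by ring, ?_,
      fun s hs => mul_nonneg hθ0 (he s hs), fun s hs => mul_nonneg (sub_nonneg.mpr hθ1) (he s hs),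
      ?_⟩
    · rw [← mul_sum, hθD]
    · rw [← mul_sum, max_eq_left (sub_nonneg.mpr hCD.le)]
      linear_combination -hθD

end ShortageSplit

theorem stmt0_general {ι : Type*} (S : Finset ι)
    (B u : ι → ℝ) (C : ℝ)
    (hC : 0 ≤ C) :
    IsLeast {val : ℝ | ∃ q v : ι → ℝ,
        (∀ s ∈ S, B s ≤ u s + q s + v s) ∧
        (∑ s ∈ S, q s ≤ C) ∧
        (∀ s ∈ S, 0 ≤ q s) ∧ (∀ s ∈ S, 0 ≤ v s) ∧
        val = ∑ s ∈ S, v s}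
      (max (∑ s ∈ S, max (B s - u s) 0 - C) 0) := by
  constructor
  · obtain ⟨q, v, hsplit, hqC, hq, hv, hsum⟩ :=
      exists_split_sum_le S C (e := fun s => max (B s - u s) 0) (fun _ _ => le_max_right _ _) hC
    refine ⟨q, v, fun s hs => ?_, hqC, hq, hv, hsum.symm⟩
    linarith [hsplit s hs, le_max_left (B s - u s) 0]
  · rintro _ ⟨q, v, hcover, hqC, hq, hv, rfl⟩
    refine max_le (sum_max_sub_le_sum_of_le_add S C (fun s hs => ?_) hqC hq hv)
      (sum_nonneg hv)
    linarith [hcover s hs]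

/-- Per-day, per-downstream-unit second-stage subproblem: the optimal value of
minimizing total surge capacity `∑ v s` subject to `B s ≤ u s + q s + v s`,
`∑ q s ≤ C`, `q, v ≥ 0` equals `max (∑ max (B s - u s) 0 - C) 0`. -/
theorem stmt0 {ι : Type*} (S : Finset ι) (hS : S.Nonempty)
    (B u : ι → ℝ) (C : ℝ)
    (hB : ∀ s ∈ S, 0 ≤ B s) (hu : ∀ s ∈ S, 0 ≤ u s) (hC : 0 ≤ C) :
    IsLeast {val : ℝ | ∃ q v : ι → ℝ,
        (∀ s ∈ S, B s ≤ u s + q s + v s) ∧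
        (∑ s ∈ S, q s ≤ C) ∧
        (∀ s ∈ S, 0 ≤ q s) ∧ (∀ s ∈ S, 0 ≤ v s) ∧
        val = ∑ s ∈ S, v s}
      (max (∑ s ∈ S, max (B s - u s) 0 - C) 0) :=
  stmt0_general S B u C hC
end

section
/- Let B and E be finite index sets and S a nonempty finite index set. For each b ∈ B let c_b ≥ 0, C_b ≥ 0 and D_{b,s} ≥ 0 (s ∈ S) be reals; for each e ∈ E let T_e ≥ 0 be a real; let A ≥ 0, O ≥ 0 and c^{ot} ≥ 0 be reals with T_e ≤ A + O for all e ∈ E. Then the optimal value of the linear program minimize Σ_{b∈B} c_b Σ_{s∈S} v_{b,s} + c^{ot} Σ_{e∈E} o_e subject to D_{b,s} ≤ q_{b,s} + v_{b,s} for all b, s; Σ_{s∈S} q_{b,s} ≤ C_b for all b; q_{b,s} ≥ 0, v_{b,s} ≥ 0; and T_e ≤ A + o_e, 0 ≤ o_e ≤ O for all e, equals Σ_{b∈B} c_b · max(Σ_{s∈S} D_{b,s} − C_b, 0) + c^{ot} Σ_{e∈E} max(T_e − A, 0). -/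
/-!
The program decouples into one problem per bed block and one per operating-room block.
In a bed block, summing the covering constraints `D s ≤ q s + v s` and using the capacity
bound gives `∑ v ≥ ∑ D - C`; allocating the shared beds proportionally,
`q s = D s · min 1 (C / ∑ D)`, uses `min (∑ D) C` beds and leaves surge exactly
`max (∑ D - C) 0`. In a room block the overtime is at least `max (T - A) 0`, and this choice
is feasible because `T ≤ A + O`.
-/

open Finset

section SharedBeds

variable {ι : Type*} (S : Finset ι) (D : ι → ℝ) (C : ℝ)

theorem max_sum_sub_le_sum_surge {q v : ι → ℝ} (hcover : ∀ s ∈ S, D s ≤ q s + v s)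
    (hcap : ∑ s ∈ S, q s ≤ C) (hv : ∀ s ∈ S, 0 ≤ v s) :
    max (∑ s ∈ S, D s - C) 0 ≤ ∑ s ∈ S, v s := by
  have hsum : ∑ s ∈ S, D s ≤ ∑ s ∈ S, q s + ∑ s ∈ S, v s := by
    rw [← sum_add_distrib]
    exact sum_le_sum hcover
  exact max_le (by linarith) (sum_nonneg hv)

noncomputable def proportionalAllocation (s : ι) : ℝ :=
  D s * min 1 (C / ∑ t ∈ S, D t)

variable {S D C}

theorem proportionalAllocation_nonneg (hD : ∀ s ∈ S, 0 ≤ D s) (hC : 0 ≤ C) {s : ι}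
    (hs : s ∈ S) : 0 ≤ proportionalAllocation S D C s :=
  mul_nonneg (hD s hs) (le_min zero_le_one (div_nonneg hC (sum_nonneg hD)))

theorem proportionalAllocation_le (hD : ∀ s ∈ S, 0 ≤ D s) {s : ι} (hs : s ∈ S) :
    proportionalAllocation S D C s ≤ D s :=
  mul_le_of_le_one_right (hD s hs) (min_le_left _ _)

theorem sum_proportionalAllocation (hD : ∀ s ∈ S, 0 ≤ D s) (hC : 0 ≤ C) :
    ∑ s ∈ S, proportionalAllocation S D C s = min (∑ s ∈ S, D s) C := by
  simp only [proportionalAllocation]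
  rw [← sum_mul, mul_min_of_nonneg _ _ (sum_nonneg hD), mul_one]
  rcases eq_or_ne (∑ s ∈ S, D s) 0 with hzero | hpos
  · simp [hzero, hC]
  · rw [mul_div_cancel₀ _ hpos]

theorem sum_sub_proportionalAllocation (hD : ∀ s ∈ S, 0 ≤ D s) (hC : 0 ≤ C) :
    ∑ s ∈ S, (D s - proportionalAllocation S D C s) = max (∑ s ∈ S, D s - C) 0 := by
  rw [sum_sub_distrib, sum_proportionalAllocation hD hC, ← max_sub_sub_left, sub_self,
    max_comm]

end SharedBeds

theorem stmt8_general {β ε ι : Type*} (Bset : Finset β) (Eset : Finset ε) (S : Finset ι)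
    (c Ccap : β → ℝ) (D : β → ι → ℝ) (T : ε → ℝ) (A O cot : ℝ)
    (hc : ∀ b ∈ Bset, 0 ≤ c b) (hCcap : ∀ b ∈ Bset, 0 ≤ Ccap b)
    (hD : ∀ b ∈ Bset, ∀ s ∈ S, 0 ≤ D b s)
    (hO : 0 ≤ O) (hcot : 0 ≤ cot)
    (hfeas : ∀ e ∈ Eset, T e ≤ A + O) :
    IsLeast {val : ℝ | ∃ (q v : β → ι → ℝ) (o : ε → ℝ),
        (∀ b ∈ Bset, ∀ s ∈ S, D b s ≤ q b s + v b s) ∧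
        (∀ b ∈ Bset, ∑ s ∈ S, q b s ≤ Ccap b) ∧
        (∀ b ∈ Bset, ∀ s ∈ S, 0 ≤ q b s) ∧
        (∀ b ∈ Bset, ∀ s ∈ S, 0 ≤ v b s) ∧
        (∀ e ∈ Eset, T e ≤ A + o e) ∧
        (∀ e ∈ Eset, 0 ≤ o e ∧ o e ≤ O) ∧
        val = ∑ b ∈ Bset, c b * ∑ s ∈ S, v b s + cot * ∑ e ∈ Eset, o e}
      (∑ b ∈ Bset, c b * max (∑ s ∈ S, D b s - Ccap b) 0 +
        cot * ∑ e ∈ Eset, max (T e - A) 0) := by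
  constructor
  · set q := fun b => proportionalAllocation S (D b) (Ccap b)
    refine ⟨q, fun b s => D b s - q b s, fun e => max (T e - A) 0, ?_, ?_, ?_, ?_, ?_, ?_, ?_⟩
    · intro b _ s _
      simp
    · intro b hb
      rw [sum_proportionalAllocation (hD b hb) (hCcap b hb)]
      exact min_le_right _ _
    · intro b hb s hs
      exact proportionalAllocation_nonneg (hD b hb) (hCcap b hb) hs
    · intro b hb s hs
      exact sub_nonneg.2 (proportionalAllocation_le (hD b hb) hs)
    · intro e _
      linarith [le_max_left (T e - A) 0]
    · intro e he
      exact ⟨le_max_right _ _, max_le (by linarith [hfeas e he]) hO⟩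
    · congr 1
      refine sum_congr rfl fun b hb => ?_
      rw [sum_sub_proportionalAllocation (hD b hb) (hCcap b hb)]
  · rintro _ ⟨q, v, o, hcover, hcap, -, hv, hover, ho, rfl⟩
    gcongr with b hb e he
    · exact hc b hb
    · exact max_sum_sub_le_sum_surge S (D b) (Ccap b) (hcover b hb) (hcap b hb) (hv b hb)
    · exact max_le (by linarith [hover e he]) (ho e he).1

/-- Full per-scenario second-stage problem in reduced form: the optimal value of
the LP with shared-bed / surge variables `q, v` over blocks `b` and overtime
variables `o` over blocks `e` equals the closed-form expression computed by the
specialized algorithm. -/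
theorem stmt8 {β ε ι : Type*} (Bset : Finset β) (Eset : Finset ε) (S : Finset ι)
    (hS : S.Nonempty)
    (c Ccap : β → ℝ) (D : β → ι → ℝ) (T : ε → ℝ) (A O cot : ℝ)
    (hc : ∀ b ∈ Bset, 0 ≤ c b) (hCcap : ∀ b ∈ Bset, 0 ≤ Ccap b)
    (hD : ∀ b ∈ Bset, ∀ s ∈ S, 0 ≤ D b s)
    (hT : ∀ e ∈ Eset, 0 ≤ T e) (hA : 0 ≤ A) (hO : 0 ≤ O) (hcot : 0 ≤ cot)
    (hfeas : ∀ e ∈ Eset, T e ≤ A + O) :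
    IsLeast {val : ℝ | ∃ (q v : β → ι → ℝ) (o : ε → ℝ),
        (∀ b ∈ Bset, ∀ s ∈ S, D b s ≤ q b s + v b s) ∧
        (∀ b ∈ Bset, ∑ s ∈ S, q b s ≤ Ccap b) ∧
        (∀ b ∈ Bset, ∀ s ∈ S, 0 ≤ q b s) ∧
        (∀ b ∈ Bset, ∀ s ∈ S, 0 ≤ v b s) ∧
        (∀ e ∈ Eset, T e ≤ A + o e) ∧
        (∀ e ∈ Eset, 0 ≤ o e ∧ o e ≤ O) ∧
        val = ∑ b ∈ Bset, c b * ∑ s ∈ S, v b s + cot * ∑ e ∈ Eset, o e}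
      (∑ b ∈ Bset, c b * max (∑ s ∈ S, D b s - Ccap b) 0 +
        cot * ∑ e ∈ Eset, max (T e - A) 0) :=
  stmt8_general Bset Eset S c Ccap D T A O cot hc hCcap hD hO hcot hfeas
end
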